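/- Under Assumption (A), there exist ε > 0 and C > 0 with the following property: if x_k ∈ 𝔹 and d_k ∈ E are sequences such that each d_k is a Newton direction at x_k, x_{k+1} = (x_k + d_k)/‖x_k + d_k‖ for all k, and ‖x_0 − x̄‖ ≤ ε, then ‖x_{k+1} − x̄‖ ≤ C ‖x_k − x̄‖² for all k, and the sequence {x_k} converges to x̄ (quadratically). -/

import Mathlib

open scoped RealInnerProductSpace

noncomputable section

/-- Euclidean space `ℝ^n`. -/
abbrev Euc (n : ℕ) : Type := EuclideanSpace ℝ (Fin n)

/-- An `m`-th order tensor on `ℝ^n`, viewed as a continuous `m`-multilinear form. -/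
abbrev Tensor (m n : ℕ) : Type := ContinuousMultilinearMap ℝ (fun _ : Fin m => Euc n) ℝ

/-- A tensor is symmetric if it is invariant under every permutation of its arguments. -/
def IsSymmTensor {m n : ℕ} (A : Tensor m n) : Prop :=
  ∀ (e : Equiv.Perm (Fin m)) (v : Fin m → Euc n), A (v ∘ e) = A v

/-- `A x^m`, the homogeneous form `A (x, …, x)`. -/
def tpow {m n : ℕ} (A : Tensor m n) (x : Euc n) : ℝ := A (fun _ => x)

/-- The last index of `Fin m`. -/
def lastIdx {m : ℕ} (_hm : 2 ≤ m) : Fin m := ⟨m - 1, by omega⟩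

/-- The second to last index of `Fin m`. -/
def sndIdx {m : ℕ} (_hm : 2 ≤ m) : Fin m := ⟨m - 2, by omega⟩

lemma sndIdx_ne_lastIdx {m : ℕ} (hm : 2 ≤ m) : sndIdx hm ≠ lastIdx hm := by
  simp only [sndIdx, lastIdx, Fin.mk.injEq, ne_eq]
  omega

/-- `A x^{m-1}`: the unique vector with `⟪A x^{m-1}, v⟫ = A (x, …, x, v)` for all `v`. -/
def tvec {m n : ℕ} (A : Tensor m n) (hm : 2 ≤ m) (x : Euc n) : Euc n :=
  (InnerProductSpace.toDual ℝ (Euc n)).symm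
    (A.toContinuousLinearMap (fun _ => x) (lastIdx hm))

/-- `F(x) = A x^{m-1} - (A x^m) • x`. -/
def Fvec {m n : ℕ} (A : Tensor m n) (hm : 2 ≤ m) (x : Euc n) : Euc n :=
  tvec A hm x - tpow A x • x

/-- `φ(x) = (1/m) A x^m`. -/
def phi {m n : ℕ} (A : Tensor m n) (x : Euc n) : ℝ := (1 / (m : ℝ)) * tpow A x

/-- Orthogonal projection `P_x d = d - ⟪x, d⟫ x` (for `x` a unit vector). -/
def Pproj {n : ℕ} (x d : Euc n) : Euc n := d - ⟪x, d⟫ • x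

/-- `x(α) = (x + α d)/‖x + α d‖`, the projection of `x + α d` onto the unit sphere. -/
def xcur {n : ℕ} (x d : Euc n) (α : ℝ) : Euc n := ‖x + α • d‖⁻¹ • (x + α • d)

/-- `w(x, d)`: the unique vector with `⟪w(x, d), v⟫ = A (x, …, x, d, v)` for all `v`. -/
def wvec {m n : ℕ} (A : Tensor m n) (hm : 2 ≤ m) (x d : Euc n) : Euc n :=
  (InnerProductSpace.toDual ℝ (Euc n)).symm
    (A.toContinuousLinearMap (Function.update (fun _ => x) (sndIdx hm) d) (lastIdx hm))

/-- `A (x, …, x, d, d)`. -/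
def A2 {m n : ℕ} (A : Tensor m n) (hm : 2 ≤ m) (x d : Euc n) : ℝ :=
  A (Function.update (Function.update (fun _ => x) (sndIdx hm) d) (lastIdx hm) d)

lemma wvec_add {m n : ℕ} (A : Tensor m n) (hm : 2 ≤ m) (x d₁ d₂ : Euc n) :
    wvec A hm x (d₁ + d₂) = wvec A hm x d₁ + wvec A hm x d₂ := by
  unfold wvec
  rw [← map_add]
  congr 1
  ext v
  simp only [ContinuousMultilinearMap.toContinuousLinearMap_apply, ContinuousLinearMap.add_apply]
  rw [Function.update_comm (sndIdx_ne_lastIdx hm), Function.update_comm (sndIdx_ne_lastIdx hm),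
    Function.update_comm (sndIdx_ne_lastIdx hm)]
  exact A.map_update_add _ _ _ _

lemma wvec_smul {m n : ℕ} (A : Tensor m n) (hm : 2 ≤ m) (x : Euc n) (c : ℝ) (d : Euc n) :
    wvec A hm x (c • d) = c • wvec A hm x d := by
  unfold wvec
  rw [← map_smul]
  congr 1
  ext v
  simp only [ContinuousMultilinearMap.toContinuousLinearMap_apply,
    ContinuousLinearMap.smul_apply, smul_eq_mul]
  rw [Function.update_comm (sndIdx_ne_lastIdx hm), Function.update_comm (sndIdx_ne_lastIdx hm)]
  exact A.map_update_smul _ _ _ _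

/-- The Jacobian `F'(x) d = (m-1) w(x,d) - (A x^m) d - m ⟪A x^{m-1}, d⟫ x`. -/
def FderivL {m n : ℕ} (A : Tensor m n) (hm : 2 ≤ m) (x : Euc n) : Euc n →L[ℝ] Euc n :=
  LinearMap.toContinuousLinearMap
  { toFun := fun d =>
      ((m : ℝ) - 1) • wvec A hm x d - tpow A x • d - ((m : ℝ) * ⟪tvec A hm x, d⟫) • x
    map_add' := by
      intro d₁ d₂
      try simp only
      rw [wvec_add, inner_add_right]
      module
    map_smul' := by
      intro c d
      simp only [RingHom.id_apply]
      rw [wvec_smul, inner_smul_right]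
      module }

/-- A Newton direction at `x`: `⟪x, d⟫ = 0` and `P_x (F'(x) d + F(x)) = 0`. -/
def NewtonDir {m n : ℕ} (A : Tensor m n) (hm : 2 ≤ m) (x d : Euc n) : Prop :=
  ⟪x, d⟫ = 0 ∧ Pproj x (FderivL A hm x d + Fvec A hm x) = 0

/-- The residual function `θ(x) = (1/2)‖F(x)‖²`. -/
def theta {m n : ℕ} (A : Tensor m n) (hm : 2 ≤ m) (x : Euc n) : ℝ :=
  (1 / 2) * ‖Fvec A hm x‖ ^ 2

/-- Assumption (A): second-order sufficient condition at the KKT point `x̄`. -/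
def AssumpA {m n : ℕ} (A : Tensor m n) (hm : 2 ≤ m) (xb : Euc n) (lam : ℝ) : Prop :=
  ‖xb‖ = 1 ∧ tvec A hm xb = lam • xb ∧ lam = tpow A xb ∧
    ∀ d : Euc n, d ≠ 0 → ⟪xb, d⟫ = 0 →
      0 < ((m : ℝ) - 1) * A2 A hm xb d - lam * ‖d‖ ^ 2

end

/-!
`F(x) = A x^{m-1} - (A x^m) x` vanishes at `x̄`, and the second-order condition makes its
Jacobian `F'(x)` uniformly coercive on the tangent space `x^⊥` for every `x` near `x̄`
(compactness of the unit sphere). As `F` is smooth, the Taylor remainder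
`F(x̄) - F(x) - F'(x)(x̄ - x)` is `O(‖x - x̄‖²)`. Testing the Newton equation against the
tangential part of `x + d - x̄` bounds that part by `O(‖x - x̄‖²)`, while its normal part is
`⟪x, x̄ - x⟫ x` with `⟪x, x̄ - x⟫ = -‖x - x̄‖² / 2`. Normalising back onto the sphere at most
doubles the distance to the unit vector `x̄`, so the error is squared at each step and, once it
is small, halves at each step.
-/

open Filter Topology Metric

section InnerProductSpace

variable {E : Type*} [NormedAddCommGroup E] [InnerProductSpace ℝ E]

theorem norm_inv_norm_smul_sub_le {x₀ : E} (hx₀ : ‖x₀‖ = 1) (y : E) :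
    ‖‖y‖⁻¹ • y - x₀‖ ≤ 2 * ‖y - x₀‖ := by
  have hnormalize : ‖‖y‖⁻¹ • y - y‖ ≤ ‖y - x₀‖ := by
    rcases eq_or_ne y 0 with rfl | hy
    · simp
    calc ‖‖y‖⁻¹ • y - y‖ = |‖y‖⁻¹ - 1| * ‖y‖ := by
          rw [← Real.norm_eq_abs, ← norm_smul, sub_smul, one_smul]
      _ = |‖y‖ - ‖x₀‖| := by
          rw [hx₀, ← abs_norm y, ← abs_mul, abs_norm, sub_mul,
            inv_mul_cancel₀ (norm_ne_zero_iff.2 hy), one_mul, abs_sub_comm]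
      _ ≤ ‖y - x₀‖ := abs_norm_sub_norm_le y x₀
  calc ‖‖y‖⁻¹ • y - x₀‖ = ‖(‖y‖⁻¹ • y - y) + (y - x₀)‖ := by rw [sub_add_sub_cancel]
    _ ≤ 2 * ‖y - x₀‖ := by linarith [norm_add_le (‖y‖⁻¹ • y - y) (y - x₀)]

theorem inner_sub_eq_neg_norm_sub_sq_div_two {x x₀ : E} (hx : ‖x‖ = 1) (hx₀ : ‖x₀‖ = 1) :
    ⟪x, x₀ - x⟫ = -(‖x - x₀‖ ^ 2 / 2) := by
  rw [inner_sub_right, real_inner_self_eq_norm_sq, norm_sub_sq_real, hx, hx₀]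
  ring

/-- `r` plays the role of `F x` and `J` that of `F'(x)`. -/
theorem norm_add_sub_le_of_newton {J : E →L[ℝ] E} {x x₀ d r : E} {c L M : ℝ} (hc : 0 < c)
    (hx : ‖x‖ = 1) (hx₀ : ‖x₀‖ = 1) (hd : ⟪x, d⟫ = 0)
    (hnewton : ∀ v, ⟪x, v⟫ = 0 → ⟪v, J d + r⟫ = 0)
    (hcoer : ∀ u, ⟪x, u⟫ = 0 → c * ‖u‖ ^ 2 ≤ ⟪u, J u⟫)
    (hres : ‖r + J (x₀ - x)‖ ≤ L * ‖x - x₀‖ ^ 2) (hJx : ‖J x‖ ≤ M) :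
    ‖x + d - x₀‖ ≤ ((L + M / 2) / c + 1 / 2) * ‖x - x₀‖ ^ 2 := by
  set δ := ‖x - x₀‖
  set t := ⟪x, x₀ - x⟫
  have ht : |t| = δ ^ 2 / 2 := by
    rw [show t = _ from inner_sub_eq_neg_norm_sub_sq_div_two hx hx₀, abs_neg,
      abs_of_nonneg (by positivity)]
  -- `u` is the tangential part of the error `x + d - x₀`
  set u := d - (x₀ - x) + t • x
  have hxu : ⟪x, u⟫ = 0 := by
    simp only [u, inner_add_right, inner_sub_right, real_inner_smul_right,
      real_inner_self_eq_norm_sq, hx, hd, t]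
    ring
  have hJu : ⟪u, J u⟫ = -⟪u, r + J (x₀ - x)⟫ + t * ⟪u, J x⟫ := by
    have := hnewton u hxu
    simp only [u, map_add, map_sub, map_smul, inner_add_right, inner_sub_right,
      real_inner_smul_right] at this ⊢
    linarith
  have hbound : ‖u‖ * (c * ‖u‖) ≤ ‖u‖ * ((L + M / 2) * δ ^ 2) := by
    have h₁ : -⟪u, r + J (x₀ - x)⟫ ≤ ‖u‖ * ‖r + J (x₀ - x)‖ :=
      (neg_le_abs _).trans (abs_real_inner_le_norm _ _)
    have h₂ : t * ⟪u, J x⟫ ≤ |t| * (‖u‖ * ‖J x‖) :=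
      (le_abs_self _).trans ((abs_mul _ _).trans_le
        (mul_le_mul_of_nonneg_left (abs_real_inner_le_norm _ _) (abs_nonneg t)))
    have h₃ := hcoer u hxu
    rw [ht] at h₂
    have : ‖u‖ * ‖J x‖ ≤ ‖u‖ * M := mul_le_mul_of_nonneg_left hJx (norm_nonneg u)
    nlinarith [mul_le_mul_of_nonneg_left hres (norm_nonneg u), sq_nonneg δ]
  have hu : ‖u‖ ≤ (L + M / 2) / c * δ ^ 2 := by
    rw [div_mul_eq_mul_div, le_div_iff₀ hc, mul_comm]
    rcases (norm_nonneg u).eq_or_lt with hu0 | hu0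
    · rw [← hu0, mul_zero]
      nlinarith [norm_nonneg (r + J (x₀ - x)), norm_nonneg (J x), sq_nonneg δ]
    · exact le_of_mul_le_mul_left hbound hu0
  calc ‖x + d - x₀‖ = ‖u - t • x‖ := by congr 1; simp only [u]; abel
    _ ≤ ‖u‖ + |t| := by
      refine (norm_sub_le _ _).trans_eq ?_
      rw [norm_smul, Real.norm_eq_abs, hx, mul_one]
    _ ≤ ((L + M / 2) / c + 1 / 2) * δ ^ 2 := by rw [ht]; linarith

end InnerProductSpace

section Coercive

variable {E : Type*} [NormedAddCommGroup E] [InnerProductSpace ℝ E] [FiniteDimensional ℝ E]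

theorem exists_eventually_coercive_on_orthogonal {J : E → E →L[ℝ] E} {x₀ : E}
    (hJ : ContinuousAt J x₀) (hpos : ∀ u ≠ 0, ⟪x₀, u⟫ = 0 → 0 < ⟪u, J x₀ u⟫) :
    ∃ c > 0, ∀ᶠ x in 𝓝 x₀, ∀ u, ⟪x, u⟫ = 0 → c * ‖u‖ ^ 2 ≤ ⟪u, J x u⟫ := by
  have hslice : IsCompact (sphere (0 : E) 1 ∩ {u | ⟪x₀, u⟫ = 0}) :=
    (isCompact_sphere 0 1).inter_right
      (isClosed_eq (continuous_const.inner continuous_id) continuous_const)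
  obtain ⟨c, hc, hcle⟩ := hslice.exists_forall_le'
    (f := fun u => ⟪u, J x₀ u⟫) (continuous_id.inner (J x₀).continuous).continuousOn (a := 0)
    fun u hu => hpos u (ne_zero_of_mem_unit_sphere ⟨u, hu.1⟩) hu.2
  -- tube lemma around the compact unit sphere
  have hsphere : ∀ᶠ x in 𝓝 x₀, ∀ u ∈ sphere (0 : E) 1, ⟪x, u⟫ = 0 → c / 2 ≤ ⟪u, J x u⟫ := by
    refine (isCompact_sphere 0 1).eventually_forall_of_forall_eventually fun y hy => ?_
    by_cases hxy : ⟪x₀, y⟫ = 0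
    · have hcont : ContinuousAt (fun z : E × E => ⟪z.2, J z.1 z.2⟫) (x₀, y) :=
        continuousAt_snd.inner ((hJ.comp continuousAt_fst).clm_apply continuousAt_snd)
      have hlt : c / 2 < ⟪y, J x₀ y⟫ := by linarith [hcle y ⟨hy, hxy⟩]
      filter_upwards [hcont.eventually (lt_mem_nhds hlt)] with z hz _ using hz.le
    · filter_upwards [(continuousAt_fst.inner continuousAt_snd).eventually_ne hxy]
        with z hz hz' using absurd hz' hz
  refine ⟨c / 2, by positivity, hsphere.mono fun x hx u hxu => ?_⟩
  rcases eq_or_ne u 0 with rfl | hu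
  · simp
  have hnu : 0 < ‖u‖ := norm_pos_iff.2 hu
  have := hx (‖u‖⁻¹ • u) (by simp [norm_smul, hnu.ne'])
    (by rw [real_inner_smul_right, hxu, mul_zero])
  rw [map_smul, real_inner_smul_left, real_inner_smul_right, ← mul_assoc, ← sq,
    inv_pow, inv_mul_eq_div, le_div_iff₀ (by positivity)] at this
  linarith

end Coercive

section Taylor

variable {E G : Type*} [NormedAddCommGroup E] [NormedSpace ℝ E] [NormedAddCommGroup G]
  [NormedSpace ℝ G]

theorem Convex.norm_image_sub_sub_le_of_lipschitzOnWith {f : E → G} {f' : E → E →L[ℝ] G}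
    {s : Set E} {K : NNReal} {x y : E} (hs : Convex ℝ s)
    (hf : ∀ z ∈ s, HasFDerivWithinAt f (f' z) s z) (hf' : LipschitzOnWith K f' s)
    (hx : x ∈ s) (hy : y ∈ s) :
    ‖f y - f x - f' x (y - x)‖ ≤ K * ‖y - x‖ ^ 2 := by
  set t := s ∩ closedBall x ‖y - x‖
  have hxt : x ∈ t := ⟨hx, mem_closedBall_self (norm_nonneg _)⟩
  have hyt : y ∈ t := ⟨hy, by rw [mem_closedBall, dist_eq_norm]⟩
  have hbound : ∀ z ∈ t, ‖f' z - f' x‖ ≤ K * ‖y - x‖ := fun z hz =>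
    (hf'.norm_sub_le hz.1 hx).trans <| by
      gcongr
      simpa [dist_eq_norm] using hz.2
  have := (hs.inter (convex_closedBall x _)).norm_image_sub_le_of_norm_hasFDerivWithin_le'
    (fun z hz => (hf z hz.1).mono Set.inter_subset_left) hbound hxt hyt
  linarith

theorem ContDiff.exists_eventually_norm_sub_sub_fderiv_le {f : E → G} (hf : ContDiff ℝ 2 f)
    (x₀ : E) : ∃ L, ∀ᶠ x in 𝓝 x₀, ‖f x₀ - f x - fderiv ℝ f x (x₀ - x)‖ ≤ L * ‖x - x₀‖ ^ 2 := by
  obtain ⟨K, t, ht, hK⟩ :=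
    ((hf.fderiv_right (m := 1) le_rfl).contDiffAt (x := x₀)).exists_lipschitzOnWith
  obtain ⟨ε, hε, hball⟩ := Metric.mem_nhds_iff.1 ht
  refine ⟨K, eventually_of_mem (ball_mem_nhds x₀ hε) fun x hx => ?_⟩
  rw [← norm_neg (x - x₀), neg_sub]
  exact (convex_ball x₀ ε).norm_image_sub_sub_le_of_lipschitzOnWith
    (fun z hz => ((hf.differentiable (by norm_num)) z).hasFDerivAt.hasFDerivWithinAt)
    (hK.mono hball) hx (mem_ball_self hε)

end Taylor

theorem le_geometric_of_le_mul_sq {e : ℕ → ℝ} {C ε : ℝ} (hnonneg : ∀ k, 0 ≤ e k)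
    (hCε : C * ε ≤ 1 / 2) (h₀ : e 0 ≤ ε) (hstep : ∀ k, e k ≤ ε → e (k + 1) ≤ C * e k ^ 2) :
    ∀ k, e k ≤ (1 / 2) ^ k * ε := by
  have hε : 0 ≤ ε := (hnonneg 0).trans h₀
  intro k
  induction k with
  | zero => simpa using h₀
  | succ k ih =>
    have hk : e k ≤ ε := ih.trans (mul_le_of_le_one_left hε (pow_le_one₀ (by norm_num)
      (by norm_num)))
    calc e (k + 1) ≤ C * e k * e k := by rw [mul_assoc, ← sq]; exact hstep k hk
      _ ≤ 1 / 2 * e k := by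
        refine mul_le_mul_of_nonneg_right ?_ (hnonneg k)
        rcases le_or_gt 0 C with hC | hC
        · nlinarith
        · nlinarith [hnonneg k]
      _ ≤ (1 / 2) ^ (k + 1) * ε := by rw [pow_succ]; linarith

section TensorCalculus

open Function

variable {m n : ℕ} {A : Tensor m n}

theorem FderivL_apply (hm : 2 ≤ m) (x d : Euc n) :
    FderivL A hm x d
      = ((m : ℝ) - 1) • wvec A hm x d - tpow A x • d - ((m : ℝ) * ⟪tvec A hm x, d⟫) • x :=
  rfl

theorem inner_tvec (hm : 2 ≤ m) (x v : Euc n) :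
    ⟪tvec A hm x, v⟫ = A (update (fun _ => x) (lastIdx hm) v) := by
  rw [tvec, InnerProductSpace.toDual_symm_apply,
    ContinuousMultilinearMap.toContinuousLinearMap_apply]

theorem inner_wvec (hm : 2 ≤ m) (x d v : Euc n) :
    ⟪wvec A hm x d, v⟫ = A (update (update (fun _ => x) (sndIdx hm) d) (lastIdx hm) v) := by
  rw [wvec, InnerProductSpace.toDual_symm_apply,
    ContinuousMultilinearMap.toContinuousLinearMap_apply]

theorem IsSymmTensor.apply_update (hA : IsSymmTensor A) (hm : 2 ≤ m) (x h : Euc n) (i : Fin m) :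
    A (update (fun _ => x) i h) = ⟪tvec A hm x, h⟫ := by
  rw [inner_tvec, ← hA (Equiv.swap (lastIdx hm) i), update_comp_equiv, Equiv.symm_swap,
    Equiv.swap_apply_right]
  rfl

theorem IsSymmTensor.apply_update_update (hA : IsSymmTensor A) (hm : 2 ≤ m) (x h v : Euc n)
    {i : Fin m} (hi : i ≠ lastIdx hm) :
    A (update (update (fun _ => x) i h) (lastIdx hm) v) = ⟪wvec A hm x h, v⟫ := by
  rw [inner_wvec, ← hA (Equiv.swap (sndIdx hm) i), update_comp_equiv, update_comp_equiv,
    Equiv.symm_swap, Equiv.swap_apply_right,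
    Equiv.swap_apply_of_ne_of_ne (sndIdx_ne_lastIdx hm).symm hi.symm]
  rfl

theorem IsSymmTensor.inner_wvec_comm (hA : IsSymmTensor A) (hm : 2 ≤ m) (x h v : Euc n) :
    ⟪wvec A hm x h, v⟫ = ⟪wvec A hm x v, h⟫ := by
  rw [inner_wvec, inner_wvec, ← hA (Equiv.swap (sndIdx hm) (lastIdx hm)), update_comp_equiv,
    update_comp_equiv, Equiv.symm_swap, Equiv.swap_apply_left, Equiv.swap_apply_right,
    update_comm (sndIdx_ne_lastIdx hm).symm]
  rfl

variable (A) in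
theorem contDiff_tpow {k : WithTop ℕ∞} : ContDiff ℝ k (tpow A) :=
  A.contDiff.comp (contDiff_pi.2 fun _ => contDiff_id)

variable (A) in
theorem contDiff_tvec (hm : 2 ≤ m) {k : WithTop ℕ∞} : ContDiff ℝ k (tvec A hm) := by
  classical
  refine contDiff_euclidean.2 fun i => ?_
  have hcoord : ∀ z, (tvec A hm z).ofLp i
      = A (update (fun _ => z) (lastIdx hm) (EuclideanSpace.single i 1)) := by
    intro z
    rw [← inner_tvec, real_inner_comm, EuclideanSpace.inner_single_left]
    simp
  simp_rw [hcoord]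
  refine A.contDiff.comp (contDiff_pi.2 fun j => ?_)
  by_cases hj : j = lastIdx hm
  · simp [hj, contDiff_const]
  · simp only [update_of_ne hj]
    exact contDiff_id

variable (A) in
theorem contDiff_Fvec (hm : 2 ≤ m) {k : WithTop ℕ∞} : ContDiff ℝ k (Fvec A hm) :=
  (contDiff_tvec A hm).sub ((contDiff_tpow A).smul contDiff_id)

theorem IsSymmTensor.hasFDerivAt_tpow (hA : IsSymmTensor A) (hm : 2 ≤ m) (y : Euc n) :
    HasFDerivAt (tpow A) ((m : ℝ) • innerSL ℝ (tvec A hm y)) y := by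
  classical
  refine (HasFDerivAt.multilinear_comp A fun _ => hasFDerivAt_id y).congr_fderiv ?_
  ext h
  simp [hA.apply_update hm]

theorem IsSymmTensor.hasFDerivAt_inner_tvec (hA : IsSymmTensor A) (hm : 2 ≤ m) (v y : Euc n) :
    HasFDerivAt (fun z => ⟪tvec A hm z, v⟫) (((m : ℝ) - 1) • innerSL ℝ (wvec A hm y v)) y := by
  classical
  have hg : ∀ i, HasFDerivAt (fun z : Euc n => update (fun _ => z) (lastIdx hm) v i)
      (if i = lastIdx hm then 0 else ContinuousLinearMap.id ℝ (Euc n)) y := by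
    intro i
    by_cases hi : i = lastIdx hm
    · simpa [hi] using hasFDerivAt_const v y
    · simp only [hi, if_false, update_of_ne hi]
      exact hasFDerivAt_id y
  simp_rw [inner_tvec]
  refine (HasFDerivAt.multilinear_comp A hg).congr_fderiv ?_
  ext h
  rw [sum_apply, Finset.sum_congr rfl fun i _ =>
    (?_ : _ = if i = lastIdx hm then 0 else ⟪wvec A hm y v, h⟫)]
  · simp [Finset.sum_ite, Finset.filter_ne', Finset.card_erase_of_mem]
    exact Or.inl (by rw [Nat.cast_sub (by omega), Nat.cast_one])
  · by_cases hi : i = lastIdx hm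
    · simp [hi]
    · simp only [hi, if_false, ContinuousLinearMap.comp_apply, ContinuousLinearMap.id_apply,
        ContinuousMultilinearMap.toContinuousLinearMap_apply]
      change A (update (update (fun _ => y) (lastIdx hm) v) i h) = _
      rw [update_comm (Ne.symm hi), hA.apply_update_update hm _ _ _ hi, hA.inner_wvec_comm]

theorem IsSymmTensor.hasFDerivAt_inner_Fvec (hA : IsSymmTensor A) (hm : 2 ≤ m) (v y : Euc n) :
    HasFDerivAt (fun z => ⟪v, Fvec A hm z⟫) ((innerSL ℝ v).comp (FderivL A hm y)) y := by
  have hfun : (fun z => ⟪v, Fvec A hm z⟫) = fun z => ⟪tvec A hm z, v⟫ - tpow A z * ⟪v, z⟫ := by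
    funext z
    rw [Fvec, inner_sub_right, real_inner_smul_right, real_inner_comm]
  rw [hfun]
  refine ((hA.hasFDerivAt_inner_tvec hm v y).sub
    ((hA.hasFDerivAt_tpow hm y).mul (innerSL ℝ v).hasFDerivAt)).congr_fderiv ?_
  ext h
  simp [FderivL_apply, inner_sub_right, real_inner_smul_right, hA.inner_wvec_comm hm y v h,
    real_inner_comm v]
  ring

theorem IsSymmTensor.fderiv_Fvec (hA : IsSymmTensor A) (hm : 2 ≤ m) :
    fderiv ℝ (Fvec A hm) = FderivL A hm := by
  funext y
  have hd := ((contDiff_Fvec A hm (k := 1)).differentiable one_ne_zero y).hasFDerivAt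
  refine ContinuousLinearMap.ext fun h => ext_inner_left ℝ fun v => ?_
  have := ((innerSL ℝ v).hasFDerivAt.comp y hd).unique (hA.hasFDerivAt_inner_Fvec hm v y)
  exact congr($this h)

end TensorCalculus

section NewtonStep

variable {m n : ℕ} {A : Tensor m n} {hm : 2 ≤ m} {xb : Euc n} {lam : ℝ}

theorem inner_eq_zero_of_Pproj_eq_zero {x v w : Euc n} (hw : Pproj x w = 0)
    (hv : ⟪x, v⟫ = 0) : ⟪v, w⟫ = 0 := by
  rw [Pproj, sub_eq_zero] at hw
  rw [hw, real_inner_smul_right, real_inner_comm x v, hv, mul_zero]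

theorem inner_FderivL_self {x u : Euc n} (hxu : ⟪x, u⟫ = 0) :
    ⟪u, FderivL A hm x u⟫ = ((m : ℝ) - 1) * A2 A hm x u - tpow A x * ‖u‖ ^ 2 := by
  rw [FderivL_apply, inner_sub_right, inner_sub_right, real_inner_smul_right,
    real_inner_smul_right, real_inner_smul_right, real_inner_comm, inner_wvec, real_inner_comm x,
    hxu, real_inner_self_eq_norm_sq]
  simp only [A2]
  ring

theorem AssumpA.Fvec_eq_zero (hAss : AssumpA A hm xb lam) : Fvec A hm xb = 0 := by
  rw [Fvec, hAss.2.1, ← hAss.2.2.1, sub_self]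

theorem AssumpA.exists_eventually_newton_step (hA : IsSymmTensor A)
    (hAss : AssumpA A hm xb lam) :
    ∃ K, ∀ᶠ x in 𝓝 xb, ∀ d, ‖x‖ = 1 → NewtonDir A hm x d → ‖x + d - xb‖ ≤ K * ‖x - xb‖ ^ 2 := by
  have hF₀ : Fvec A hm xb = 0 := hAss.Fvec_eq_zero
  obtain ⟨hxb, -, hlam, hsecond⟩ := hAss
  have hF : ContDiff ℝ 2 (Fvec A hm) := contDiff_Fvec A hm
  have hJ : Continuous (FderivL A hm) := hA.fderiv_Fvec hm ▸ hF.continuous_fderiv two_ne_zero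
  obtain ⟨c, hc, hcoer⟩ := exists_eventually_coercive_on_orthogonal hJ.continuousAt
    fun u hu hxu => by
      rw [inner_FderivL_self hxu, ← hlam]
      exact hsecond u hu hxu
  obtain ⟨L, hL⟩ := hF.exists_eventually_norm_sub_sub_fderiv_le xb
  set M := ‖FderivL A hm xb xb‖ + 1
  have hM : ∀ᶠ x in 𝓝 xb, ‖FderivL A hm x x‖ ≤ M :=
    ((hJ.clm_apply continuous_id).norm.continuousAt.eventually
      (gt_mem_nhds (lt_add_one _))).mono fun _ => le_of_lt
  refine ⟨(L + M / 2) / c + 1 / 2, ?_⟩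
  filter_upwards [hcoer, hL, hM] with x hcx hLx hMx d hx ⟨hd, hP⟩
  rw [hA.fderiv_Fvec hm, hF₀, zero_sub, ← neg_add', norm_neg] at hLx
  exact norm_add_sub_le_of_newton hc hx hxb hd
    (fun v hv => inner_eq_zero_of_Pproj_eq_zero hP hv) hcx hLx hMx

end NewtonStep

theorem stmt9_general {m n : ℕ} (hm : 2 ≤ m) (A : Tensor m n) (hA : IsSymmTensor A)
    (xb : Euc n) (lam : ℝ) (hAss : AssumpA A hm xb lam) :
    ∃ ε > 0, ∃ C > 0, ∀ x d : ℕ → Euc n,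
      (∀ k, ‖x k‖ = 1) → (∀ k, NewtonDir A hm (x k) (d k)) →
      (∀ k, x (k + 1) = ‖x k + d k‖⁻¹ • (x k + d k)) → ‖x 0 - xb‖ ≤ ε →
      (∀ k, ‖x (k + 1) - xb‖ ≤ C * ‖x k - xb‖ ^ 2) ∧
      Filter.Tendsto x Filter.atTop (nhds xb) := by
  obtain ⟨K, hK⟩ := hAss.exists_eventually_newton_step hA
  obtain ⟨ε₀, hε₀, hnewton⟩ := Metric.eventually_nhds_iff.1 hK
  set C := 2 * max K 1
  set ε := min (ε₀ / 2) (1 / (2 * C))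
  have hCε : C * ε ≤ 1 / 2 := by
    have := (le_div_iff₀ (by positivity)).1 (min_le_right (ε₀ / 2) (1 / (2 * C)))
    linarith
  refine ⟨ε, by positivity, C, by positivity, fun x d hx hd hrec h₀ => ?_⟩
  have hstep : ∀ k, ‖x k - xb‖ ≤ ε → ‖x (k + 1) - xb‖ ≤ C * ‖x k - xb‖ ^ 2 := fun k hk =>
    calc ‖x (k + 1) - xb‖ ≤ 2 * ‖x k + d k - xb‖ := hrec k ▸ norm_inv_norm_smul_sub_le hAss.1 _
      _ ≤ 2 * (K * ‖x k - xb‖ ^ 2) := by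
        gcongr
        refine hnewton ?_ (d k) (hx k) (hd k)
        rw [dist_eq_norm]
        linarith [min_le_left (ε₀ / 2) (1 / (2 * C))]
      _ ≤ C * ‖x k - xb‖ ^ 2 := by rw [← mul_assoc]; gcongr; linarith [le_max_left K 1]
  have hgeo := le_geometric_of_le_mul_sq (e := fun k => ‖x k - xb‖) (fun _ => norm_nonneg _)
    hCε h₀ hstep
  refine ⟨fun k => hstep k ((hgeo k).trans ?_), ?_⟩
  · exact mul_le_of_le_one_left (by positivity) (pow_le_one₀ (by norm_num) (by norm_num))
  · refine tendsto_iff_norm_sub_tendsto_zero.2 (squeeze_zero (fun _ => norm_nonneg _) hgeo ?_)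
    simpa using (tendsto_pow_atTop_nhds_zero_of_lt_one (by norm_num : (0 : ℝ) ≤ 1 / 2)
      (by norm_num)).mul_const ε

/-- local quadratic convergence of the feasible local Newton method. -/
theorem stmt9 {m n : ℕ} (hn : 1 ≤ n) (hm : 2 ≤ m) (A : Tensor m n) (hA : IsSymmTensor A)
    (xb : Euc n) (lam : ℝ) (hAss : AssumpA A hm xb lam) :
    ∃ ε > 0, ∃ C > 0, ∀ x d : ℕ → Euc n,
      (∀ k, ‖x k‖ = 1) → (∀ k, NewtonDir A hm (x k) (d k)) →
      (∀ k, x (k + 1) = ‖x k + d k‖⁻¹ • (x k + d k)) → ‖x 0 - xb‖ ≤ ε →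
      (∀ k, ‖x (k + 1) - xb‖ ≤ C * ‖x k - xb‖ ^ 2) ∧
      Filter.Tendsto x Filter.atTop (nhds xb) :=
  stmt9_general hm A hA xb lam hAss
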